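/- Let μ ∈ M(𝕋^d) and let Λ ⊂ ℤ^d be a finite subset. Suppose there exists φ ∈ U with |φ(x)| = 1 for all x ∈ 𝕋^d and ⟨φ,μ⟩ = ε(μ,Λ). Then Γ(μ,Λ) ≠ ∅ and ε(μ,Λ) = ‖μ̂‖_{ℓ∞(Λ)} = sup_{m∈Λ} |μ̂(m)|. -/

import Mathlib

/- Setting: `M(𝕋^d)`, the space of complex bounded Radon measures on the `d`-dimensional
torus, is identified with the continuous dual of `C(𝕋^d, ℂ)` via the Riesz representation
theorem; the total variation norm corresponds to the operator norm. -/

open MeasureTheory Complex Real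

noncomputable section

attribute [local instance] ZeroLEOneClass.factZeroLtOne

/-- The `d`-dimensional torus `𝕋^d = (ℝ/ℤ)^d`. -/
abbrev Torus (d : ℕ) : Type := Fin d → AddCircle (1 : ℝ)

/-- The character `x ↦ e^{2πi m·x}` on the torus, for `m ∈ ℤ^d`. -/
def torusChar {d : ℕ} (m : Fin d → ℤ) : C(Torus d, ℂ) :=
  ⟨fun x => ∏ i, fourier (m i) (x i), by
    refine continuous_finsetProd _ fun i _ => ?_
    exact (map_continuous (fourier (m i))).comp (continuous_apply i)⟩

/-- The space `M(𝕋^d)` of complex bounded Radon measures on the torus, identified (via the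
Riesz representation theorem) with the continuous dual of `C(𝕋^d, ℂ)`; the total variation
norm is the operator norm. -/
abbrev TorusMeasure (d : ℕ) : Type := C(Torus d, ℂ) →L[ℂ] ℂ

/-- The Fourier coefficient `μ̂(m) = ∫_{𝕋^d} e^{-2πi m·x} dμ(x)`. -/
def mFourierCoeff {d : ℕ} (μ : TorusMeasure d) (m : Fin d → ℤ) : ℂ :=
  μ (torusChar (-m))

/-- `ν` is an extrapolation of `μ` from `Λ` if `ν̂ = μ̂` on `Λ`. -/
def IsExtrapolation {d : ℕ} (μ : TorusMeasure d) (Λ : Finset (Fin d → ℤ))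
    (ν : TorusMeasure d) : Prop :=
  ∀ m ∈ Λ, mFourierCoeff ν m = mFourierCoeff μ m

/-- `ε(μ,Λ) = inf {‖σ‖ : σ ∈ M(𝕋^d), σ̂ = μ̂ on Λ}`. -/
def minExtNorm {d : ℕ} (μ : TorusMeasure d) (Λ : Finset (Fin d → ℤ)) : ℝ :=
  sInf ((fun ν => ‖ν‖) '' {ν | IsExtrapolation μ Λ ν})

/-- `ν` is a minimal extrapolation of `μ` from `Λ`, i.e. `ν ∈ 𝓔(μ,Λ)`:
an extrapolation whose total variation norm equals `ε(μ,Λ)`. -/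
def IsMinimalExtrapolation {d : ℕ} (μ : TorusMeasure d) (Λ : Finset (Fin d → ℤ))
    (ν : TorusMeasure d) : Prop :=
  IsExtrapolation μ Λ ν ∧ ‖ν‖ = minExtNorm μ Λ

/-- `Γ(μ,Λ) = {m ∈ Λ : |μ̂(m)| = ε(μ,Λ)}`. -/
def gammaSet {d : ℕ} (μ : TorusMeasure d) (Λ : Finset (Fin d → ℤ)) : Set (Fin d → ℤ) :=
  {m | m ∈ Λ ∧ ‖mFourierCoeff μ m‖ = minExtNorm μ Λ}

/-- The measure `ν` is supported in the set `S`: it annihilates every continuous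
function vanishing on `S` (for closed `S` this says `supp(ν) ⊆ S`). -/
def SupportedIn {d : ℕ} (ν : TorusMeasure d) (S : Set (Torus d)) : Prop :=
  ∀ f : C(Torus d, ℂ), (∀ x ∈ S, f x = 0) → ν f = 0

/-- The pairing `⟨f,μ⟩ = ∫_{𝕋^d} f(x) conj(dμ(x)) = conj (μ (conj f))`. -/
def mPairing {d : ℕ} (f : C(Torus d, ℂ)) (μ : TorusMeasure d) : ℂ :=
  starRingEnd ℂ (μ (star f))

/-- `C(𝕋^d;Λ)`: the subspace of trigonometric polynomials
`f(x) = ∑_{m ∈ Λ} a_m e^{2πi m·x}` with frequencies in `Λ`. -/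
def trigPoly {d : ℕ} (Λ : Finset (Fin d → ℤ)) : Submodule ℂ C(Torus d, ℂ) :=
  Submodule.span ℂ (torusChar '' (Λ : Set (Fin d → ℤ)))

/-- For a continuous `g` with `‖g‖_∞ ≤ 1`, the assertion that `sign(ν) = g`
`ν`-almost everywhere, expressed through the standard equivalent condition
`⟨g,ν⟩ = ‖ν‖` (obtained by integrating the Radon–Nikodym identity
`∫ f d|ν| = ∫ f conj(sign ν) dν` against `f = conj g` and using `|ν|(𝕋^d) = ‖ν‖`). -/
def SignEqAE {d : ℕ} (ν : TorusMeasure d) (g : C(Torus d, ℂ)) : Prop :=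
  mPairing g ν = (‖ν‖ : ℂ)

/-- `ν` is a positive measure: it takes nonnegative real values on nonnegative real-valued
continuous functions. -/
def IsPositiveMeasure {d : ℕ} (ν : TorusMeasure d) : Prop :=
  ∀ f : C(Torus d, ℂ), (∀ x, (f x).im = 0 ∧ 0 ≤ (f x).re) → (ν f).im = 0 ∧ 0 ≤ (ν f).re

/-- The Dirac measure `δ_x`: evaluation at `x`. -/
def diracM {d : ℕ} (x : Torus d) : TorusMeasure d :=
  ContinuousMap.evalCLM (R := ℂ) x

/-- The modulation `M_n ν`, defined by `d(M_n ν)(x) = e^{2πi n·x} dν(x)`. -/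
def modulateM {d : ℕ} (n : Fin d → ℤ) (ν : TorusMeasure d) : TorusMeasure d :=
  ν.comp (ContinuousLinearMap.mul ℂ C(Torus d, ℂ) (torusChar n))


/-!
A trigonometric polynomial `φ` with `|φ| ≡ 1` satisfies `φ · conj φ = 1`, and `conj φ` is again a
trigonometric polynomial. Since the characters `e_m` are linearly independent, the coefficients of
`φ` then form a unit of the group algebra `ℂ[ℤ^d]`; as `ℤ^d` has unique sums, such a unit is a
monomial, so `φ = c e_m` with `|c| = 1` and `m ∈ Λ`. Hence `ε(μ,Λ) = |⟨φ,μ⟩| = |μ̂(m)|`, while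
`|μ̂(n)| = |σ̂(n)| ≤ ‖σ‖` for every extrapolation `σ` and every `n ∈ Λ`.
-/

namespace AddMonoidAlgebra
open Finset
variable {R A : Type*} [Semiring R] [NoZeroDivisors R]

theorem card_support_coeff_mul_le_one [Add A] [TwoUniqueSums A] {f g : AddMonoidAlgebra R A}
    (hfg : #(f * g).coeff.support ≤ 1) : #f.coeff.support * #g.coeff.support ≤ 1 := by
  by_contra! h
  obtain ⟨p, hp, q, hq, hpq, hup, huq⟩ := TwoUniqueSums.uniqueAdd_of_one_lt_card h
  have mem_support : ∀ r ∈ f.coeff.support ×ˢ g.coeff.support,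
      UniqueAdd f.coeff.support g.coeff.support r.1 r.2 → r.1 + r.2 ∈ (f * g).coeff.support := by
    intro r hr hu
    rw [mem_product, Finsupp.mem_support_iff, Finsupp.mem_support_iff] at hr
    rw [Finsupp.mem_support_iff, coeff_mul_add_of_uniqueAdd hu]
    exact mul_ne_zero hr.1 hr.2
  have hne : p.1 + p.2 ≠ q.1 + q.2 := fun heq => by
    rw [mem_product] at hq
    obtain ⟨h1, h2⟩ := hup hq.1 hq.2 heq.symm
    exact hpq (Prod.ext h1.symm h2.symm)
  exact hfg.not_gt (one_lt_card.2 ⟨_, mem_support p hp hup, _, mem_support q hq huq, hne⟩)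

theorem exists_eq_single_of_isUnit [Nontrivial R] [AddMonoid A] [TwoUniqueSums A]
    {f : AddMonoidAlgebra R A} (hf : IsUnit f) : ∃ a r, f = single a r := by
  obtain ⟨g, hfg⟩ := hf.exists_right_inv
  have hg : g.coeff.support.Nonempty := by
    rw [Finsupp.support_nonempty_iff]
    rintro h
    simp [coeff_injective.eq_iff.mp h] at hfg
  have hcard := card_support_coeff_mul_le_one (f := f) (g := g) (by simp [hfg])
  obtain ⟨a, r, h⟩ :=
    Finsupp.card_support_le_one'.1 ((Nat.le_mul_of_pos_right _ (card_pos.2 hg)).trans hcard)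
  exact ⟨a, r, coeff_injective h⟩

end AddMonoidAlgebra

section
variable {d : ℕ}

lemma torusChar_apply (m : Fin d → ℤ) (x : Torus d) :
    torusChar m x = ∏ i, fourier (m i) (x i) := rfl

lemma torusChar_zero : torusChar (0 : Fin d → ℤ) = 1 := by
  ext x; simp [torusChar_apply]

lemma torusChar_add (m n : Fin d → ℤ) : torusChar (m + n) = torusChar m * torusChar n := by
  ext x; simp [torusChar_apply, Finset.prod_mul_distrib]

lemma torusChar_neg (m : Fin d → ℤ) : torusChar (-m) = star (torusChar m) := by
  ext x; simp [torusChar_apply]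

lemma torusChar_apply_zero (m : Fin d → ℤ) : torusChar m 0 = 1 := by
  simp [torusChar_apply]

lemma torusChar_apply_add (m : Fin d → ℤ) (x y : Torus d) :
    torusChar m (x + y) = torusChar m x * torusChar m y := by
  simp [torusChar_apply, fourier_apply, AddCircle.toCircle_add, Finset.prod_mul_distrib]

lemma torusChar_apply_single (m : Fin d → ℤ) (i : Fin d) (t : AddCircle (1 : ℝ)) :
    torusChar m (Pi.single i t) = fourier (m i) t := by
  rw [torusChar_apply, Finset.prod_eq_single i]
  · simp
  · intro j _ hj; simp [hj]
  · simp

lemma norm_torusChar_apply (m : Fin d → ℤ) (x : Torus d) : ‖torusChar m x‖ = 1 := by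
  simp only [torusChar_apply, norm_prod, fourier_apply, Circle.norm_coe, Finset.prod_const_one]

lemma norm_torusChar (m : Fin d → ℤ) : ‖torusChar m‖ = 1 := by
  simp only [ContinuousMap.norm_eq_iSup_norm, norm_torusChar_apply, ciSup_const]

lemma fourier_injective {T : ℝ} [Fact (0 < T)] : Function.Injective (fourier (T := T)) :=
  fun m n h => orthonormal_fourier.linearIndependent.injective (by unfold fourierLp; rw [h])

lemma torusChar_injective : Function.Injective (torusChar (d := d)) := by
  intro m n h
  funext i
  apply fourier_injective (T := 1)
  ext t
  simpa only [torusChar_apply_single] using DFunLike.congr_fun h (Pi.single i t)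

lemma linearIndependent_torusChar : LinearIndependent ℂ (torusChar (d := d)) := by
  let χ : (Fin d → ℤ) → Multiplicative (Torus d) →* ℂ := fun m =>
    { toFun := fun x => torusChar m x.toAdd
      map_one' := torusChar_apply_zero m
      map_mul' := fun x y => torusChar_apply_add m x.toAdd y.toAdd }
  refine LinearIndependent.of_comp (ContinuousMap.coeFnLinearMap ℂ) ?_
  exact (linearIndependent_monoidHom (Multiplicative (Torus d)) ℂ).comp χ fun m n h =>
    torusChar_injective (ContinuousMap.ext fun x => DFunLike.congr_fun h (.ofAdd x))

variable (d) in
def trigEval : AddMonoidAlgebra ℂ (Fin d → ℤ) →ₐ[ℂ] C(Torus d, ℂ) :=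
  AddMonoidAlgebra.lift ℂ C(Torus d, ℂ) (Fin d → ℤ)
    { toFun := fun m => torusChar m.toAdd
      map_one' := torusChar_zero
      map_mul' := fun m n => torusChar_add m.toAdd n.toAdd }

lemma trigEval_single (m : Fin d → ℤ) (c : ℂ) :
    trigEval d (AddMonoidAlgebra.single m c) = c • torusChar m := by
  simp [trigEval]

lemma trigEval_injective : Function.Injective (trigEval d) := by
  intro f g h
  apply AddMonoidAlgebra.coeff_injective
  apply linearIndependent_torusChar
  simpa [trigEval, AddMonoidAlgebra.lift_apply, Finsupp.linearCombination_apply] using h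

lemma trigPoly_eq_map_supported (Λ : Finset (Fin d → ℤ)) :
    trigPoly Λ = (AddMonoidAlgebra.supported ℂ ℂ ↑Λ).map (trigEval d).toLinearMap := by
  rw [AddMonoidAlgebra.supported_eq_span_single, Submodule.map_span, ← Set.image_comp]
  simp [trigPoly, Function.comp_def, trigEval_single]

lemma mem_trigPoly_iff {Λ : Finset (Fin d → ℤ)} {φ : C(Torus d, ℂ)} :
    φ ∈ trigPoly Λ ↔ ∃ f : AddMonoidAlgebra ℂ (Fin d → ℤ),
      ↑f.coeff.support ⊆ (Λ : Set (Fin d → ℤ)) ∧ trigEval d f = φ := by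
  rw [trigPoly_eq_map_supported, Submodule.mem_map]
  rfl

open Pointwise in
lemma star_mem_trigPoly {Λ : Finset (Fin d → ℤ)} {φ : C(Torus d, ℂ)}
    (hφ : φ ∈ trigPoly Λ) :
    star φ ∈ trigPoly (-Λ) := by
  have himage : torusChar '' ↑(-Λ) = star '' (torusChar '' (Λ : Set (Fin d → ℤ))) := by
    simp only [Finset.coe_neg, ← Set.image_neg_eq_neg, Set.image_image, torusChar_neg]
  have h :=
    Submodule.mem_map_of_mem (f := (starLinearEquiv ℂ (A := C(Torus d, ℂ))).toLinearMap) hφ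
  rw [trigPoly, Submodule.map_span] at h
  rwa [trigPoly, himage]

lemma exists_eq_smul_torusChar_of_norm_eq_one {Λ : Finset (Fin d → ℤ)} {φ : C(Torus d, ℂ)}
    (hφ : φ ∈ trigPoly Λ) (hmod : ∀ x, ‖φ x‖ = 1) :
    ∃ m ∈ Λ, ∃ c : ℂ, ‖c‖ = 1 ∧ φ = c • torusChar m := by
  obtain ⟨g, -, hg⟩ := mem_trigPoly_iff.1 (star_mem_trigPoly hφ)
  obtain ⟨f, hfΛ, rfl⟩ := mem_trigPoly_iff.1 hφ
  have hfg : f * g = 1 := by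
    apply trigEval_injective
    ext x
    rw [map_mul, hg, map_one, ContinuousMap.mul_apply, ContinuousMap.star_apply, RCLike.star_def,
      RCLike.mul_conj, hmod]
    simp
  obtain ⟨m, c, rfl⟩ := AddMonoidAlgebra.exists_eq_single_of_isUnit (IsUnit.of_mul_eq_one _ hfg)
  have hc : ‖c‖ = 1 := by simpa [trigEval_single, norm_torusChar_apply] using hmod 0
  have hc0 : c ≠ 0 := by rintro rfl; simp at hc
  refine ⟨m, hfΛ ?_, c, hc, trigEval_single m c⟩
  simp [AddMonoidAlgebra.coeff_single, hc0]

lemma norm_mFourierCoeff_le (ν : TorusMeasure d) (m : Fin d → ℤ) :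
    ‖mFourierCoeff ν m‖ ≤ ‖ν‖ :=
  (ν.le_opNorm _).trans_eq (by rw [norm_torusChar, mul_one])

lemma norm_mFourierCoeff_le_minExtNorm (μ : TorusMeasure d) {Λ : Finset (Fin d → ℤ)}
    {m : Fin d → ℤ} (hm : m ∈ Λ) : ‖mFourierCoeff μ m‖ ≤ minExtNorm μ Λ :=
  le_csInf ⟨‖μ‖, μ, fun _ _ => rfl, rfl⟩ <| by
    rintro _ ⟨ν, hν, rfl⟩
    exact hν m hm ▸ norm_mFourierCoeff_le ν m

lemma minExtNorm_nonneg (μ : TorusMeasure d) (Λ : Finset (Fin d → ℤ)) :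
    0 ≤ minExtNorm μ Λ :=
  Real.sInf_nonneg <| by rintro _ ⟨ν, -, rfl⟩; exact norm_nonneg ν

lemma mPairing_smul_torusChar (c : ℂ) (m : Fin d → ℤ) (μ : TorusMeasure d) :
    mPairing (c • torusChar m) μ = c * starRingEnd ℂ (mFourierCoeff μ m) := by
  rw [mPairing, star_smul, ← torusChar_neg, map_smul, smul_eq_mul, map_mul, RCLike.star_def,
    Complex.conj_conj, mFourierCoeff]

end

theorem gammaSet_nonempty_and_minExtNorm_eq_sup_general {d : ℕ} (μ : TorusMeasure d)
    (Λ : Finset (Fin d → ℤ)) (φ : C(Torus d, ℂ)) (hφΛ : φ ∈ trigPoly Λ)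
    (hmod : ∀ x, ‖φ x‖ = 1)
    (hφμ : mPairing φ μ = (minExtNorm μ Λ : ℂ)) :
    (gammaSet μ Λ).Nonempty ∧
    IsGreatest ((fun m => ‖mFourierCoeff μ m‖) '' (Λ : Set (Fin d → ℤ)))
      (minExtNorm μ Λ) := by
  obtain ⟨m, hm, c, hc, rfl⟩ := exists_eq_smul_torusChar_of_norm_eq_one hφΛ hmod
  have hm_gamma : ‖mFourierCoeff μ m‖ = minExtNorm μ Λ := by
    have := congrArg norm hφμ
    rwa [mPairing_smul_torusChar, norm_mul, hc, one_mul, RCLike.norm_conj, Complex.norm_real,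
      Real.norm_of_nonneg (minExtNorm_nonneg μ Λ)] at this
  refine ⟨⟨m, hm, hm_gamma⟩, ⟨m, hm, hm_gamma⟩, ?_⟩
  rintro _ ⟨n, hn, rfl⟩
  exact norm_mFourierCoeff_le_minExtNorm μ hn

/-- **Proposition 2.4.** If there exists `φ ∈ U` with `|φ| ≡ 1` and `⟨φ,μ⟩ = ε(μ,Λ)`,
then `Γ(μ,Λ) ≠ ∅` and `ε(μ,Λ) = ‖μ̂‖_{ℓ∞(Λ)} = sup_{m ∈ Λ} |μ̂(m)|`. -/
theorem gammaSet_nonempty_and_minExtNorm_eq_sup {d : ℕ} (μ : TorusMeasure d)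
    (Λ : Finset (Fin d → ℤ)) (φ : C(Torus d, ℂ)) (hφΛ : φ ∈ trigPoly Λ)
    (hφ1 : ‖φ‖ ≤ 1) (hmod : ∀ x, ‖φ x‖ = 1)
    (hφμ : mPairing φ μ = (minExtNorm μ Λ : ℂ)) :
    (gammaSet μ Λ).Nonempty ∧
    IsGreatest ((fun m => ‖mFourierCoeff μ m‖) '' (Λ : Set (Fin d → ℤ)))
      (minExtNorm μ Λ) :=
  gammaSet_nonempty_and_minExtNorm_eq_sup_general μ Λ φ hφΛ hmod hφμ

end
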